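/- For positive integers a with a ≥ 2 and z ∈ ℂ \ ℤ, the value Ψ_a(z)^2 = 2Ψ_{a,a}(z) + Ψ_{2a}(z). -/

import Mathlib

/-!
Squaring the absolutely convergent series `Ψ_a(z) = ∑ (z + m)⁻ᵃ` (`a ≥ 2`) gives a sum over all
pairs `(m₁, m₂) ∈ ℤ²`. Splitting the pairs into `m₁ < m₂`, `m₁ = m₂` and `m₁ > m₂`, the diagonal
contributes `Ψ_{2a}(z)`, and by the symmetry of the summand both off-diagonal parts equal
`Ψ_{a,a}(z)`.
-/

/-- The monotangent function `Ψ_k(z)`. -/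
noncomputable def Monotangent (k : ℕ) (z : ℂ) : ℂ := ∑' m : ℤ, ((z + (m : ℂ)) ^ k)⁻¹

/-- The multitangent function `Ψ_{k_1,...,k_d}(z)`. -/
noncomputable def Multitangent {d : ℕ} (k : Fin d → ℕ) (z : ℂ) : ℂ :=
  ∑' m : {m : Fin d → ℤ // StrictMono m}, ∏ i, ((z + (m.1 i : ℂ)) ^ k i)⁻¹

section OrderedPairs

variable {ι : Type*} [LinearOrder ι]

theorem tsum_prod_eq_tsum_lt_add_tsum_diag_add_tsum_lt_swap {α : Type*} [UniformSpace α]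
    [AddCommGroup α] [IsUniformAddGroup α] [CompleteSpace α] [T2Space α]
    {F : ι × ι → α} (hF : Summable F) :
    ∑' p, F p = ∑' p : {p : ι × ι | p.1 < p.2}, F p + ∑' i, F (i, i)
      + ∑' p : {p : ι × ι | p.1 < p.2}, F (Prod.swap p) := by
  have hsplit : (Set.univ : Set (ι × ι)) =
      {p | p.1 < p.2} ∪ (Set.range Function.diag ∪ {p | p.2 < p.1}) := by
    ext ⟨i, j⟩
    simp only [Set.mem_univ, Set.mem_union, Set.mem_ofPred_eq, Set.range_diag,
      Set.mem_diagonal_iff, true_iff]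
    exact lt_trichotomy i j
  have hdisj₁ : Disjoint {p : ι × ι | p.1 < p.2} (Set.range Function.diag ∪ {p | p.2 < p.1}) := by
    rw [Set.range_diag, Set.disjoint_left]
    rintro ⟨i, j⟩ (hij : i < j) (hji | hji)
    exacts [hij.ne hji, lt_asymm hij hji]
  have hdisj₂ : Disjoint (Set.range Function.diag) {p : ι × ι | p.2 < p.1} := by
    rw [Set.range_diag, Set.disjoint_left]
    rintro ⟨i, j⟩ (hij : i = j) (hji : j < i)
    exact hji.ne' hij
  rw [← tsum_univ, hsplit, (hF.subtype _).tsum_union_disjoint hdisj₁ (hF.subtype _),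
    (hF.subtype _).tsum_union_disjoint hdisj₂ (hF.subtype _), tsum_range F Function.diag_injective,
    ← add_assoc]
  congr 1
  exact (((Equiv.prodComm ι ι).subtypeEquiv fun _ => Iff.rfl).tsum_eq
    fun q : {p : ι × ι | p.2 < p.1} => F q).symm

theorem tsum_sq_eq_two_mul_tsum_lt_add_tsum_sq {R : Type*} [NormedCommRing R] [CompleteSpace R]
    {f : ι → R} (hf : Summable fun i => ‖f i‖) :
    (∑' i, f i) ^ 2 = 2 * ∑' p : {p : ι × ι | p.1 < p.2}, f p.1.1 * f p.1.2 + ∑' i, f i ^ 2 := by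
  rw [sq, tsum_mul_tsum_of_summable_norm hf hf,
    tsum_prod_eq_tsum_lt_add_tsum_diag_add_tsum_lt_swap
      (F := fun p : ι × ι => f p.1 * f p.2) (summable_mul_of_summable_norm hf hf)]
  have hswap : ∑' p : {p : ι × ι | p.1 < p.2}, f p.1.2 * f p.1.1 =
      ∑' p : {p : ι × ι | p.1 < p.2}, f p.1.1 * f p.1.2 :=
    tsum_congr fun _ => mul_comm _ _
  simp only [Prod.fst_swap, Prod.snd_swap, hswap, sq]
  ring

end OrderedPairs

def strictMonoFinTwoEquiv (ι : Type*) [Preorder ι] :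
    {m : Fin 2 → ι // StrictMono m} ≃ {p : ι × ι | p.1 < p.2} :=
  (finTwoArrowEquiv ι).subtypeEquiv fun _ => by simp [Fin.strictMono_iff_lt_succ]

theorem multitangent_pair (k l : ℕ) (z : ℂ) :
    Multitangent ![k, l] z =
      ∑' p : {p : ℤ × ℤ | p.1 < p.2}, ((z + p.1.1) ^ k)⁻¹ * ((z + p.1.2) ^ l)⁻¹ := by
  rw [Multitangent, ← (strictMonoFinTwoEquiv ℤ).symm.tsum_eq]
  exact tsum_congr fun p => Fin.prod_univ_two _

theorem summable_norm_inv_add_int_pow {a : ℕ} (ha : 2 ≤ a) (z : ℂ) :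
    Summable fun m : ℤ => ‖((z + m) ^ a)⁻¹‖ := by
  refine summable_norm_iff.mpr ?_
  simpa using EisensteinSeries.linear_right_summable z 1 (k := a) (by exact_mod_cast ha)

theorem monotangent_sq_general (a : ℕ) (ha : 2 ≤ a) (z : ℂ) :
    Monotangent a z ^ 2 = 2 * Multitangent ![a, a] z + Monotangent (2 * a) z := by
  rw [Monotangent, tsum_sq_eq_two_mul_tsum_lt_add_tsum_sq (summable_norm_inv_add_int_pow ha z),
    multitangent_pair, Monotangent]
  simp only [← inv_pow, ← pow_mul, mul_comm a 2]

theorem monotangent_sq (a : ℕ) (ha : 2 ≤ a) (z : ℂ) (hz : ∀ m : ℤ, z ≠ m) :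
    Monotangent a z ^ 2 = 2 * Multitangent ![a, a] z + Monotangent (2 * a) z :=
  monotangent_sq_general a ha z
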